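/- Let G be a graph with a fixed vertex o and let γ = (γ(i))_{i∈ℤ} be a bi-infinite geodesic in G with γ(0) = o. Let t ≥ 1 and let 𝓘 be an interface (a finite t-connected set of vertices such that o ∈ 𝓘 or o lies in a finite connected component of the complement of 𝓘) with |𝓘| = n. Then there exists an integer i with 0 ≤ i ≤ t(n−1) such that γ(i) ∈ 𝓘. -/

import Mathlib

open MeasureTheory Set
open scoped ENNReal

namespace PercPaper

/-! ### The Bernoulli(p) product measure on `ι → Bool`

We realize the Bernoulli product measure as the pushforward of the uniform
measure on `[0,1)` under the standard digit-interleaving construction: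
the binary digits of a uniform point of `[0,1)` are i.i.d. fair coins; by
interleaving (via the pairing function `Nat.pair`) we extract countably many
independent uniform random variables, and thresholding each at `p` produces
i.i.d. Bernoulli(`p`) bits. -/

/-- The `k`-th binary digit of a real number `x ∈ [0,1)`. -/
noncomputable def digit (k : ℕ) (x : ℝ) : Bool :=
  decide (⌊x * 2 ^ (k + 1)⌋ % 2 = 1)

/-- The `i`-th of countably many independent uniforms extracted from a single
uniform `x ∈ [0,1)` by digit interleaving. -/
noncomputable def unif (i : ℕ) (x : ℝ) : ℝ :=
  ∑' k : ℕ, if digit (Nat.pair i k) x then ((2 : ℝ) ^ (k + 1))⁻¹ else 0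

/-- The coordinates of the Bernoulli(`p`) product: coordinate `i` is `true`
("open") iff the `i`-th extracted uniform is `< p`. -/
noncomputable def coords (ι : Type) [Countable ι] (p : ℝ) (x : ℝ) : ι → Bool :=
  letI : Encodable ι := Encodable.ofCountable ι
  fun i => decide (unif (Encodable.encode i) x < p)

/-- The Bernoulli(`p`) product measure on `ι → Bool`. -/
noncomputable def bernoulliProd (ι : Type) [Countable ι] (p : ℝ) :
    Measure (ι → Bool) :=
  Measure.map (coords ι p) (volume.restrict (Set.Ico (0 : ℝ) 1))

/-! ### Graphs: the class of graphs under consideration -/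

/-- A simple, nonempty, locally finite, connected graph.  (Such a graph is
automatically countable; we record countability as a field.) -/
structure SpaceGraph : Type 1 where
  V : Type
  G : SimpleGraph V
  connected : G.Connected
  locallyFinite : ∀ v : V, (G.neighborSet v).Finite
  countableV : Countable V

instance (Γ : SpaceGraph) : Countable Γ.V := Γ.countableV

/-! ### Combinatorial notions on plain simple graphs -/

/-- `u` and `v` are `k`-adjacent: `1 ≤ d_G(u,v) ≤ k`. -/
def kAdj {V : Type} (G : SimpleGraph V) (k : ℕ) (u v : V) : Prop :=
  1 ≤ G.dist u v ∧ G.dist u v ≤ k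

/-- A set of vertices is `k`-connected if it is connected under `k`-adjacency. -/
def kConnectedSet {V : Type} (G : SimpleGraph V) (k : ℕ) (A : Set V) : Prop :=
  ∀ x ∈ A, ∀ y ∈ A,
    Relation.ReflTransGen (fun a b => a ∈ A ∧ b ∈ A ∧ kAdj G k a b) x y

/-- Two distinct edges are `k`-adjacent if some endpoint of one lies at
distance at most `k` from some endpoint of the other. -/
def edgeKAdj {V : Type} (G : SimpleGraph V) (k : ℕ) (e f : Sym2 V) : Prop :=
  e ≠ f ∧ ∃ x ∈ e, ∃ y ∈ f, G.dist x y ≤ k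

/-- A set of edges is `k`-connected if it is connected under `k`-adjacency. -/
def edgeKConnectedSet {V : Type} (G : SimpleGraph V) (k : ℕ) (A : Set (Sym2 V)) : Prop :=
  ∀ e ∈ A, ∀ f ∈ A,
    Relation.ReflTransGen (fun a b => a ∈ A ∧ b ∈ A ∧ edgeKAdj G k a b) e f

/-- `A` is a cutset between `u` and `v`: every walk from `u` to `v` meets `A`. -/
def IsCutset {V : Type} (G : SimpleGraph V) (A : Set V) (u v : V) : Prop :=
  ∀ w : G.Walk u v, ∃ x ∈ w.support, x ∈ A

/-- `A` is a minimal cutset between `u` and `v`. -/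
def IsMinCutset {V : Type} (G : SimpleGraph V) (A : Set V) (u v : V) : Prop :=
  IsCutset G A u v ∧ ∀ B : Set V, B ⊂ A → ¬IsCutset G B u v

/-- `C(G) ≤ k`: every minimal cutset between two vertices is `k`-connected. -/
def cutConnLe {V : Type} (G : SimpleGraph V) (k : ℕ) : Prop :=
  ∀ u v : V, ∀ A : Set V, IsMinCutset G A u v → kConnectedSet G k A

/-- `C*(G) ≤ k`: every finite minimal cutset between two vertices is `k`-connected. -/
def cutConnStarLe {V : Type} (G : SimpleGraph V) (k : ℕ) : Prop :=
  ∀ u v : V, ∀ A : Set V, A.Finite → IsMinCutset G A u v → kConnectedSet G k A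

/-- `A` is a bond-cutset between `u` and `v`: a set of edges of `G` such that
every walk from `u` to `v` uses an edge of `A`. -/
def IsBondCutset {V : Type} (G : SimpleGraph V) (A : Set (Sym2 V)) (u v : V) : Prop :=
  A ⊆ G.edgeSet ∧ ∀ w : G.Walk u v, ∃ e ∈ w.edges, e ∈ A

/-- `A` is a minimal bond-cutset between `u` and `v`. -/
def IsMinBondCutset {V : Type} (G : SimpleGraph V) (A : Set (Sym2 V)) (u v : V) : Prop :=
  IsBondCutset G A u v ∧ ∀ B : Set (Sym2 V), B ⊂ A → ¬IsBondCutset G B u v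

/-- `C_E(G) ≤ k`: every minimal bond-cutset between two vertices is `k`-connected. -/
def edgeCutConnLe {V : Type} (G : SimpleGraph V) (k : ℕ) : Prop :=
  ∀ u v : V, ∀ A : Set (Sym2 V), IsMinBondCutset G A u v → edgeKConnectedSet G k A

/-- `C*_E(G) ≤ k`: every finite minimal bond-cutset between two vertices is
`k`-connected. -/
def edgeCutConnStarLe {V : Type} (G : SimpleGraph V) (k : ℕ) : Prop :=
  ∀ u v : V, ∀ A : Set (Sym2 V), A.Finite → IsMinBondCutset G A u v →
    edgeKConnectedSet G k A

/-- Reachability inside a set `S` of vertices. -/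
def reachIn {V : Type} (G : SimpleGraph V) (S : Set V) : V → V → Prop :=
  Relation.ReflTransGen fun a b => a ∈ S ∧ b ∈ S ∧ G.Adj a b

/-- There is a path from `x` to `y` all of whose vertices lie in `S`. -/
def pathIn {V : Type} (G : SimpleGraph V) (S : Set V) (x y : V) : Prop :=
  x ∈ S ∧ reachIn G S x y

/-- The connected component of `u` of the subgraph induced on `S`. -/
def compIn {V : Type} (G : SimpleGraph V) (S : Set V) (u : V) : Set V :=
  {v | pathIn G S u v}

/-- `G` is one-ended: for every finite set `F` of vertices, the complement of
`F` has exactly one infinite connected component. -/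
def OneEnded {V : Type} (G : SimpleGraph V) : Prop :=
  ∀ F : Set V, F.Finite →
    ∃ u, u ∉ F ∧ (compIn G Fᶜ u).Infinite ∧
      ∀ v, v ∉ F → (compIn G Fᶜ v).Infinite → pathIn G Fᶜ u v

/-- The outer vertex boundary `∂_V A`: vertices not in `A` adjacent to `A`. -/
def vertexBoundary {V : Type} (G : SimpleGraph V) (A : Set V) : Set V :=
  {v | v ∉ A ∧ ∃ u ∈ A, G.Adj u v}

/-- A fibration: a 1-Lipschitz map along which every edge at the image of `x`
lifts to an edge at `x`. -/
def IsFibration {V W : Type} (GrL : SimpleGraph V) (GrS : SimpleGraph W)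
    (pr : V → W) : Prop :=
  (∀ x y : V, GrS.dist (pr x) (pr y) ≤ GrL.dist x y) ∧
  (∀ (x : V) (v : W), GrS.Adj (pr x) v → ∃ y : V, GrL.Adj x y ∧ pr y = v)

/-- `φ` is an `A`-quasi-isometry. -/
def IsQI {V W : Type} (A : ℝ) (G : SimpleGraph V) (H : SimpleGraph W)
    (φ : V → W) : Prop :=
  (∀ x y : V, (1 / A) * (G.dist x y : ℝ) - A ≤ (H.dist (φ x) (φ y) : ℝ) ∧
      (H.dist (φ x) (φ y) : ℝ) ≤ A * (G.dist x y : ℝ) + A) ∧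
  (∀ z : W, ∃ x : V, (H.dist z (φ x) : ℝ) ≤ A)

/-- `G` and `H` are `A`-quasi-isometric (with `A`-quasi-inverse maps). -/
def QuasiIsometric {V W : Type} (A : ℝ) (G : SimpleGraph V) (H : SimpleGraph W) : Prop :=
  ∃ (φ : V → W) (ψ : W → V), IsQI A G H φ ∧ IsQI A H G ψ ∧
    (∀ x : V, (G.dist (ψ (φ x)) x : ℝ) ≤ A) ∧
    (∀ z : W, (H.dist (φ (ψ z)) z : ℝ) ≤ A)

/-! ### Balls, transitivity, the class `𝔊`, and the local topology -/

/-- The ball of radius `r` around `o`. -/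
def ball (Γ : SpaceGraph) (o : Γ.V) (r : ℕ) : Set Γ.V := {v | Γ.G.dist o v ≤ r}

/-- The sphere of radius `r` around `o`. -/
def sphere (Γ : SpaceGraph) (o : Γ.V) (r : ℕ) : Set Γ.V := {v | Γ.G.dist o v = r}

/-- `Γ` is (vertex-)transitive. -/
def IsTransitive (Γ : SpaceGraph) : Prop :=
  ∀ u v : Γ.V, ∃ φ : Γ.G ≃g Γ.G, φ u = v

/-- Membership in the class `𝔊`: transitive, superlinear growth, and
polynomial growth. -/
def InPolyClass (Γ : SpaceGraph) : Prop :=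
  IsTransitive Γ ∧
  (∀ (o : Γ.V) (K : ℕ), ∃ R : ℕ, ∀ r : ℕ, R ≤ r → K * r ≤ (ball Γ o r).ncard) ∧
  (∃ C d : ℕ, ∀ (o : Γ.V) (r : ℕ), 1 ≤ r → (ball Γ o r).ncard ≤ C * r ^ d)

lemma self_mem_ball (Γ : SpaceGraph) (o : Γ.V) (r : ℕ) : o ∈ ball Γ o r := by
  simp [ball, SimpleGraph.dist_self]

/-- The rooted balls of radius `r` in `Γ` (around `o`) and `Δ` (around `o'`)
are isomorphic, by an isomorphism matching the roots. -/
def rootedBallIso (Γ Δ : SpaceGraph) (o : Γ.V) (o' : Δ.V) (r : ℕ) : Prop :=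
  ∃ φ : Γ.G.induce (ball Γ o r) ≃g Δ.G.induce (ball Δ o' r),
    φ ⟨o, self_mem_ball Γ o r⟩ = ⟨o', self_mem_ball Δ o' r⟩

/-- `R(Γ,Δ) ≥ r`: the `r`-balls of `Γ` and `Δ` are isomorphic as rooted graphs. -/
def RGe (Γ Δ : SpaceGraph) (r : ℕ) : Prop :=
  ∃ (o : Γ.V) (o' : Δ.V), rootedBallIso Γ Δ o o' r

/-! ### Bernoulli percolation -/

/-- The probability of the event `A` under Bernoulli(`p`) bond percolation on `Γ`.
(Configurations assign a state to every element of `Sym2 Γ.V`; only the states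
of actual edges matter for the events considered.) -/
noncomputable def prob (Γ : SpaceGraph) (p : ℝ) (A : Set (Sym2 Γ.V → Bool)) : ℝ :=
  (bernoulliProd (Sym2 Γ.V) p A).toReal

/-- The probability of the event `A`, as an extended nonnegative real. -/
noncomputable def probNN (Γ : SpaceGraph) (p : ℝ) (A : Set (Sym2 Γ.V → Bool)) : ℝ≥0∞ :=
  bernoulliProd (Sym2 Γ.V) p A

/-- `u` and `v` are adjacent and the edge between them is open in `ω`. -/
def openAdj (Γ : SpaceGraph) (ω : Sym2 Γ.V → Bool) (u v : Γ.V) : Prop :=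
  Γ.G.Adj u v ∧ ω s(u, v) = true

/-- `u` and `v` are connected by an open path in `ω`. -/
def Conn (Γ : SpaceGraph) (ω : Sym2 Γ.V → Bool) (u v : Γ.V) : Prop :=
  Relation.ReflTransGen (openAdj Γ ω) u v

/-- The (open) cluster of `u` in `ω`. -/
def cluster (Γ : SpaceGraph) (ω : Sym2 Γ.V → Bool) (u : Γ.V) : Set Γ.V :=
  {v | Conn Γ ω u v}

/-- `θ_Γ(p)` with root `o` (independent of `o` for transitive graphs). -/
noncomputable def theta (Γ : SpaceGraph) (o : Γ.V) (p : ℝ) : ℝ :=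
  prob Γ p {ω | (cluster Γ ω o).Infinite}

/-- The critical parameter `p_c(Γ)` (with root `o`). -/
noncomputable def pc (Γ : SpaceGraph) (o : Γ.V) : ℝ :=
  sInf ({1} ∪ {p : ℝ | p ∈ Set.Icc (0 : ℝ) 1 ∧ 0 < theta Γ o p})


/-! ### Good and bad vertices, interfaces -/

/-- Open connectivity using only vertices of `S`. -/
def ConnIn (Γ : SpaceGraph) (ω : Sym2 Γ.V → Bool) (S : Set Γ.V) (u v : Γ.V) : Prop :=
  Relation.ReflTransGen (fun a b => a ∈ S ∧ b ∈ S ∧ openAdj Γ ω a b) u v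

/-- The uniqueness event `U(m,n,x)`: at most one cluster of `ω` restricted to
`B(x,n)` intersects both `B(x,m)` and `S(x,n)`. -/
def UEvent (Γ : SpaceGraph) (ω : Sym2 Γ.V → Bool) (m n : ℕ) (x : Γ.V) : Prop :=
  ∀ a b a' b' : Γ.V, a ∈ ball Γ x m → b ∈ sphere Γ x n →
    a' ∈ ball Γ x m → b' ∈ sphere Γ x n →
    ConnIn Γ ω (ball Γ x n) a b → ConnIn Γ ω (ball Γ x n) a' b' →
    ConnIn Γ ω (ball Γ x n) a a'

/-- `x` is `N`-good in `ω`. -/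
def NGood (Γ : SpaceGraph) (ω : Sym2 Γ.V → Bool) (N : ℕ) (x : Γ.V) : Prop :=
  ∀ z : Γ.V, (z = x ∨ Γ.G.Adj x z) →
    (∃ a ∈ ball Γ z N, ∃ b ∈ sphere Γ z (10 * N), Conn Γ ω a b) ∧
      UEvent Γ ω (2 * N) (5 * N) z

/-- `x` is `N`-bad in `ω`. -/
def NBad (Γ : SpaceGraph) (ω : Sym2 Γ.V → Bool) (N : ℕ) (x : Γ.V) : Prop :=
  ¬NGood Γ ω N x

/-- `C_x^bad(N)`: the `t`-connected component of `x` within the `N`-bad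
vertices (empty if `x` is `N`-good). -/
def badComp (Γ : SpaceGraph) (ω : Sym2 Γ.V → Bool) (N t : ℕ) (x : Γ.V) : Set Γ.V :=
  {y | NBad Γ ω N x ∧
    Relation.ReflTransGen (fun a b => NBad Γ ω N a ∧ NBad Γ ω N b ∧ kAdj Γ.G t a b) x y}

/-- `C_o(N)`: the set of vertices within distance `N` of the cluster of `o`. -/
def clusterNbhd (Γ : SpaceGraph) (ω : Sym2 Γ.V → Bool) (o : Γ.V) (N : ℕ) : Set Γ.V :=
  {v | ∃ u ∈ cluster Γ ω o, Γ.G.dist v u ≤ N}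

/-- The exposed boundary `∂A`: vertices of `A` adjacent to an infinite
connected component of the complement of `A`. -/
def exposedBoundary (Γ : SpaceGraph) (A : Set Γ.V) : Set Γ.V :=
  {v | v ∈ A ∧ ∃ w, w ∉ A ∧ Γ.G.Adj v w ∧ (compIn Γ.G Aᶜ w).Infinite}

/-- An interface (relative to the root `o` and the connectivity constant `t`):
a finite `t`-connected set of vertices containing `o` or surrounding `o`. -/
def IsInterface (Γ : SpaceGraph) (o : Γ.V) (t : ℕ) (I : Finset Γ.V) : Prop :=
  kConnectedSet Γ.G t (↑I : Set Γ.V) ∧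
    (o ∈ I ∨ (o ∉ I ∧ (compIn Γ.G ((↑I : Set Γ.V))ᶜ o).Finite))

/-- The set of vertices within distance `r` of `I`. -/
def interfaceNbhd (Γ : SpaceGraph) (I : Finset Γ.V) (r : ℕ) : Set Γ.V :=
  {v | ∃ y ∈ I, Γ.G.dist v y ≤ r}

/-- The interface `I` occurs in `ω` at scale `N`: all its vertices are `N`-bad,
all vertices at distance between `1` and `t` from it are `N`-good, and the
closed edges with both endpoints within distance `5N` of `I` form a
bond-cutset between `o` and infinity. -/
def InterfaceOccurs (Γ : SpaceGraph) (o : Γ.V) (t N : ℕ) (ω : Sym2 Γ.V → Bool)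
    (I : Finset Γ.V) : Prop :=
  (∀ x ∈ I, NBad Γ ω N x) ∧
  (∀ x : Γ.V, x ∉ I → (∃ y ∈ I, Γ.G.dist x y ≤ t) → NGood Γ ω N x) ∧
  (∀ f : ℕ → Γ.V, f 0 = o → Function.Injective f →
    (∀ n : ℕ, Γ.G.Adj (f n) (f (n + 1))) →
    ∃ n : ℕ, ω s(f n, f (n + 1)) = false ∧
      f n ∈ interfaceNbhd Γ I (5 * N) ∧ f (n + 1) ∈ interfaceNbhd Γ I (5 * N))

/-- A multi-interface: a finite nonempty collection of pairwise disjoint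
interfaces. -/
def IsMultiInterface (Γ : SpaceGraph) (o : Γ.V) (t : ℕ)
    (M : Finset (Finset Γ.V)) : Prop :=
  M.Nonempty ∧ (∀ I ∈ M, IsInterface Γ o t I) ∧
    ∀ I ∈ M, ∀ J ∈ M, I ≠ J → Disjoint I J

/-- The size of a multi-interface. -/
def multiSize {α : Type} (M : Finset (Finset α)) : ℕ := ∑ I ∈ M, I.card

/-- The multi-interface `M` occurs in `ω` at scale `N`. -/
def MultiOccurs (Γ : SpaceGraph) (o : Γ.V) (t N : ℕ) (ω : Sym2 Γ.V → Bool)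
    (M : Finset (Finset Γ.V)) : Prop :=
  ∀ I ∈ M, InterfaceOccurs Γ o t N ω I

/-! ### Growth degree and dimension -/

/-- `Γ` has growth of degree at most `d`. -/
def growthLe (Γ : SpaceGraph) (d : ℕ) : Prop :=
  ∃ C : ℕ, ∀ (o : Γ.V) (r : ℕ), 1 ≤ r → (ball Γ o r).ncard ≤ C * r ^ d

/-- The dimension of a graph of polynomial growth: the least degree `d` of a
polynomial upper bound on the growth. -/
noncomputable def dimen (Γ : SpaceGraph) : ℕ := sInf {d | growthLe Γ d}

/-! ### Cayley graphs and products of cycle-graphs -/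

/-- The Cayley graph of a group `K` with respect to a (symmetrized) set `T`. -/
def cayley (K : Type) [Group K] (T : Set K) : SimpleGraph K where
  Adj g h := g ≠ h ∧ (g⁻¹ * h ∈ T ∨ h⁻¹ * g ∈ T)
  symm := ⟨by
    rintro g h ⟨hgh, hmem⟩
    exact ⟨hgh.symm, hmem.symm⟩⟩
  loopless := ⟨fun g h => h.1 rfl⟩

/-- A finitely generated group is one-ended if all of its Cayley graphs with
respect to finite generating sets are one-ended. -/
def GroupOneEnded (K : Type) [Group K] : Prop :=
  ∀ T : Set K, T.Finite → Subgroup.closure T = ⊤ → OneEnded (cayley K T)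

/-- The box product of a finite family of graphs. -/
def boxProd {m : ℕ} (Vf : Fin m → Type) (Gf : ∀ i, SimpleGraph (Vf i)) :
    SimpleGraph (∀ i, Vf i) where
  Adj a b := ∃ i, (Gf i).Adj (a i) (b i) ∧ ∀ j, j ≠ i → a j = b j
  symm := ⟨by
    rintro a b ⟨i, hadj, h⟩
    exact ⟨i, hadj.symm, fun j hj => (h j hj).symm⟩⟩
  loopless := ⟨by
    rintro a ⟨i, hadj, -⟩
    exact hadj.ne rfl⟩

/-- Membership in the class `𝔄`: products of finitely many cycle-graphs
(connected graphs in which every vertex has degree 2), at least two of which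
are infinite. -/
def InA (Γ : SpaceGraph) : Prop :=
  ∃ (m : ℕ) (Vf : Fin m → Type) (Gf : ∀ i, SimpleGraph (Vf i)),
    (∀ i, (Gf i).Connected) ∧
    (∀ (i : Fin m) (v : Vf i), ((Gf i).neighborSet v).ncard = 2) ∧
    (∃ i j : Fin m, i ≠ j ∧ Infinite (Vf i) ∧ Infinite (Vf j)) ∧
    Nonempty (Γ.G ≃g boxProd Vf Gf)

/-! If `o ∉ I`, the component of `o` in the complement of `I` is finite, so each of the two
injective rays `γ(0), γ(1), …` and `γ(0), γ(-1), …` must leave it, i.e. meet `I`, say at `γ(a)`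
and `γ(-b)`. Two vertices of a `t`-connected set of `n` vertices are joined inside it by a
`t`-chain without repetitions, of at most `n - 1` steps, so they lie at distance at most
`t(n - 1)`. Since `γ` is a geodesic, `a ≤ a + b = d(γ(a), γ(-b)) ≤ t(n - 1)`. -/

section KConnected

variable {V : Type} {G : SimpleGraph V} {t : ℕ} {S : Set V} {u v : V}

lemma kAdj.symm (h : kAdj G t u v) : kAdj G t v u := by
  simpa only [kAdj, SimpleGraph.dist_comm] using h

lemma kAdj.reachable (h : kAdj G t u v) : G.Reachable u v :=
  .of_dist_ne_zero (Nat.one_le_iff_ne_zero.mp h.1)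

def kAdjGraph (G : SimpleGraph V) (t : ℕ) (S : Set V) : SimpleGraph V where
  Adj a b := a ∈ S ∧ b ∈ S ∧ kAdj G t a b
  symm := ⟨fun _ _ h ↦ ⟨h.2.1, h.1, h.2.2.symm⟩⟩
  loopless := ⟨fun _ h ↦ by simp [kAdj] at h⟩

lemma kConnectedSet.reachable (hS : kConnectedSet G t S) (hu : u ∈ S) (hv : v ∈ S) :
    (kAdjGraph G t S).Reachable u v := by
  rw [SimpleGraph.reachable_iff_reflTransGen]
  exact hS u hu v hv

lemma dist_le_mul_length_of_kAdjGraph (p : (kAdjGraph G t S).Walk u v) :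
    G.dist u v ≤ t * p.length := by
  induction p with
  | nil => simp
  | cons h p ih =>
    calc G.dist _ _ ≤ G.dist _ _ + G.dist _ _ := h.2.2.reachable.dist_triangle_left _
      _ ≤ t + t * p.length := add_le_add h.2.2.2 ih
      _ = t * (p.cons h).length := by rw [SimpleGraph.Walk.length_cons]; ring

lemma mem_of_mem_support_kAdjGraph (p : (kAdjGraph G t S).Walk u v) (hu : u ∈ S) :
    ∀ z ∈ p.support, z ∈ S := by
  induction p with
  | nil => simpa using hu
  | cons h p ih => simpa [hu] using ih h.2.1

lemma kConnectedSet.dist_le {S : Finset V} (hS : kConnectedSet G t (↑S : Set V))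
    (hu : u ∈ S) (hv : v ∈ S) : G.dist u v ≤ t * (S.card - 1) := by
  classical
  obtain ⟨p, hp⟩ := (hS.reachable hu hv).exists_isPath
  have hlen : p.length + 1 ≤ S.card := by
    rw [← p.length_support, ← List.toFinset_card_of_nodup hp.support_nodup]
    exact Finset.card_le_card fun z hz ↦
      mem_of_mem_support_kAdjGraph p hu z (List.mem_toFinset.mp hz)
  calc G.dist u v ≤ t * p.length := dist_le_mul_length_of_kAdjGraph p
    _ ≤ t * (S.card - 1) := Nat.mul_le_mul_left t (by omega)

end KConnected

lemma exists_notMem_of_compIn_finite {V : Type} {G : SimpleGraph V} {S : Set V} {f : ℕ → V}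
    (hf : Function.Injective f) (hadj : ∀ k, G.Adj (f k) (f (k + 1)))
    (hfin : (compIn G S (f 0)).Finite) : ∃ k, f k ∉ S := by
  by_contra! hS
  have hmem : ∀ k, f k ∈ compIn G S (f 0) := by
    intro k
    induction k with
    | zero => exact ⟨hS 0, .refl⟩
    | succ k ih => exact ⟨hS 0, ih.2.tail ⟨hS k, hS (k + 1), hadj k⟩⟩
  exact Set.infinite_of_injective_forall_mem hf hmem hfin

def IsBiGeodesic {V : Type} (G : SimpleGraph V) (γ : ℤ → V) : Prop :=
  ∀ i j : ℤ, G.dist (γ i) (γ j) = (i - j).natAbs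

namespace IsBiGeodesic

variable {V : Type} {G : SimpleGraph V} {γ : ℤ → V}

lemma injective (hγ : IsBiGeodesic G γ) : Function.Injective γ := fun i j h ↦ by
  have := hγ i j
  rw [h, SimpleGraph.dist_self] at this
  omega

lemma adj_succ (hγ : IsBiGeodesic G γ) (i : ℤ) : G.Adj (γ i) (γ (i + 1)) := by
  rw [← SimpleGraph.dist_eq_one_iff_adj, hγ]
  omega

lemma reverse (hγ : IsBiGeodesic G γ) : IsBiGeodesic G (fun i ↦ γ (-i)) := fun i j ↦ by
  rw [hγ]
  omega

lemma exists_nat_notMem_of_compIn_finite (hγ : IsBiGeodesic G γ) {S : Set V}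
    (hfin : (compIn G S (γ 0)).Finite) : ∃ k : ℕ, γ k ∉ S :=
  exists_notMem_of_compIn_finite (hγ.injective.comp Nat.cast_injective)
    (fun k ↦ by exact_mod_cast hγ.adj_succ k) hfin

end IsBiGeodesic

theorem interface_meets_geodesic_general
    {V : Type} (G : SimpleGraph V)
    (o : V) (γ : ℤ → V)
    (hgeo : ∀ i j : ℤ, G.dist (γ i) (γ j) = (i - j).natAbs)
    (hγo : γ 0 = o)
    (t : ℕ) (I : Finset V)
    (hIconn : kConnectedSet G t (↑I : Set V))
    (hIint : o ∈ I ∨ (o ∉ I ∧ (compIn G ((↑I : Set V))ᶜ o).Finite))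
    (n : ℕ) (hcard : I.card = n) :
    ∃ i : ℕ, i ≤ t * (n - 1) ∧ γ (i : ℤ) ∈ I := by
  have hγ : IsBiGeodesic G γ := hgeo
  rcases hIint with hoI | ⟨-, hfin⟩
  · exact ⟨0, Nat.zero_le _, hγo ▸ hoI⟩
  rw [← hγo] at hfin
  obtain ⟨a, ha⟩ := hγ.exists_nat_notMem_of_compIn_finite hfin
  obtain ⟨b, hb⟩ := hγ.reverse.exists_nat_notMem_of_compIn_finite (by simpa using hfin)
  simp only [Set.notMem_compl_iff, Finset.mem_coe] at ha hb
  have hab := hIconn.dist_le ha hb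
  rw [hgeo, hcard] at hab
  exact ⟨a, by omega, ha⟩

/-- Lemma: interfaces meet a geodesic ray close to the
origin.  Let `γ` be a bi-infinite geodesic through `o = γ(0)` and let `𝓘` be
an interface with `|𝓘| = n`.  Then `γ(i) ∈ 𝓘` for some `0 ≤ i ≤ t(n−1)`. -/
theorem interface_meets_geodesic
    {V : Type} (G : SimpleGraph V) (hne : Nonempty V) (hconn : G.Connected)
    (hlf : ∀ v : V, (G.neighborSet v).Finite)
    (o : V) (γ : ℤ → V)
    (hgeo : ∀ i j : ℤ, G.dist (γ i) (γ j) = (i - j).natAbs)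
    (hγo : γ 0 = o)
    (t : ℕ) (ht : 1 ≤ t) (I : Finset V)
    (hIconn : kConnectedSet G t (↑I : Set V))
    (hIint : o ∈ I ∨ (o ∉ I ∧ (compIn G ((↑I : Set V))ᶜ o).Finite))
    (n : ℕ) (hcard : I.card = n) :
    ∃ i : ℕ, i ≤ t * (n - 1) ∧ γ (i : ℤ) ∈ I :=
  interface_meets_geodesic_general G o γ hgeo hγo t I hIconn hIint n hcard

end PercPaper
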